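/- Let F₁ be a long-tailed distribution and F₂ a distribution such that F₂(x - c, x + c] = o(\bar{F₁}(x)) as x → ∞ for some c > 0. Then the convolution F₁ * F₂ is long-tailed. -/

import Mathlib

open MeasureTheory Filter Set Asymptotics

/-- Tail function of a distribution: `F̄(x) = μ(x, ∞)`. -/
noncomputable def tail (μ : Measure ℝ) (x : ℝ) : ℝ := (μ (Set.Ioi x)).toReal

/-- `F(a, b] = F(b) - F(a)`. -/
noncomputable def intv (μ : Measure ℝ) (a b : ℝ) : ℝ := (μ (Set.Ioc a b)).toReal

/-- A distribution is long-tailed if `F̄(x+1)/F̄(x) → 1` as `x → ∞`. -/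
def LongTailed (μ : Measure ℝ) : Prop :=
  Tendsto (fun x => tail μ (x + 1) / tail μ x) atTop (nhds 1)

/-- Convolution of two distributions on ℝ (law of the sum of independent rvs). -/
noncomputable def mconv (μ ν : Measure ℝ) : Measure ℝ :=
  Measure.map (fun p : ℝ × ℝ => p.1 + p.2) (μ.prod ν)

/-- `n`-fold convolution of a distribution with itself; `nconv μ 0` is the unit mass at 0. -/
noncomputable def nconv (μ : Measure ℝ) : ℕ → Measure ℝ
  | 0 => Measure.dirac 0
  | n + 1 => mconv (nconv μ n) μ

/-!
Write `F = F₁ * F₂` and split the event `X + Y ∈ (x, x + 1]` according to whether `Y ≤ x - K` or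
`X < K + 1`. On the first part `X` lies in the unit window `(x - Y, x - Y + 1]` beyond `K`, which
carries at most a fraction `ε` of `F̄₁(x - Y)` because `F₁` is long-tailed; integrating over `Y`
gives at most `ε F̄(x)`. On the second part `Y` lies in a unit window to the right of `x - K - 1`;
finitely many windows of width `2c` cover it, so its `F₂`-mass is `o(F̄₁(x - K - 1))`. Finally
`F̄₁(x - K - 1) = O(F̄₁(x))` by long-tailedness, and `F̄₁(x) = O(F̄(x))` since
`F̄(x) ≥ F₂(b, ∞) F̄₁(x - b)`. Hence `F(x, x + 1] = o(F̄(x))`, which is long-tailedness of `F`.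
-/

open scoped ENNReal Topology

variable {μ ν : Measure ℝ}

lemma tail_nonneg (μ : Measure ℝ) (x : ℝ) : 0 ≤ tail μ x := ENNReal.toReal_nonneg

lemma intv_nonneg (μ : Measure ℝ) (a b : ℝ) : 0 ≤ intv μ a b := ENNReal.toReal_nonneg

@[simp]
lemma norm_tail (μ : Measure ℝ) (x : ℝ) : ‖tail μ x‖ = tail μ x :=
  Real.norm_of_nonneg (tail_nonneg μ x)

@[simp]
lemma norm_intv (μ : Measure ℝ) (a b : ℝ) : ‖intv μ a b‖ = intv μ a b :=
  Real.norm_of_nonneg (intv_nonneg μ a b)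

lemma tail_antitone (μ : Measure ℝ) [IsFiniteMeasure μ] : Antitone (tail μ) :=
  fun _ _ h => measureReal_mono (Ioi_subset_Ioi h)

lemma tail_eq_intv_add_tail (μ : Measure ℝ) [IsFiniteMeasure μ] {x y : ℝ} (h : x ≤ y) :
    tail μ x = intv μ x y + tail μ y := by
  simp only [tail, intv, ← measureReal_def]
  rw [← measureReal_union (Ioc_disjoint_Ioi le_rfl) measurableSet_Ioi, Ioc_union_Ioi_eq_Ioi h]

lemma intv_le_tail (μ : Measure ℝ) [IsFiniteMeasure μ] {x y : ℝ} (h : x ≤ y) :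
    intv μ x y ≤ tail μ x := by
  rw [tail_eq_intv_add_tail μ h]
  exact le_add_of_nonneg_right (tail_nonneg μ y)

lemma LongTailed.tail_pos [IsFiniteMeasure μ] (h : LongTailed μ) (x : ℝ) : 0 < tail μ x := by
  by_contra! hx
  have hzero : ∀ᶠ y in atTop, tail μ (y + 1) / tail μ y = 0 := by
    filter_upwards [eventually_ge_atTop x] with y hy
    rw [le_antisymm ((tail_antitone μ hy).trans hx) (tail_nonneg μ y), div_zero]
  exact one_ne_zero (tendsto_nhds_unique h (tendsto_const_nhds.congr' (hzero.mono
    fun _ h => h.symm)))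

theorem longTailed_iff [IsFiniteMeasure μ] :
    LongTailed μ ↔ (∀ x, 0 < tail μ x) ∧ (fun x => intv μ x (x + 1)) =o[atTop] tail μ := by
  have hratio : ∀ x, 0 < tail μ x →
      tail μ (x + 1) / tail μ x = 1 - intv μ x (x + 1) / tail μ x := fun x hx => by
    rw [eq_sub_iff_add_eq, ← add_div, add_comm, ← tail_eq_intv_add_tail μ (by linarith),
      div_self hx.ne']
  have hdiv : (fun x => intv μ x (x + 1)) =o[atTop] tail μ ↔
      Tendsto (fun x => intv μ x (x + 1) / tail μ x) atTop (𝓝 0) :=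
    isLittleO_iff_tendsto' (Eventually.of_forall fun x (hx : tail μ x = 0) =>
      le_antisymm (hx ▸ intv_le_tail μ (by linarith)) (intv_nonneg μ _ _))
  rw [hdiv]
  constructor
  · intro h
    refine ⟨h.tail_pos, ?_⟩
    simpa using ((tendsto_const_nhds (x := (1 : ℝ))).sub h).congr fun x => by
      rw [hratio x (h.tail_pos x), sub_sub_cancel]
  · rintro ⟨hpos, h⟩
    simpa [LongTailed] using
      ((tendsto_const_nhds (x := (1 : ℝ))).sub h).congr fun x => (hratio x (hpos x)).symm

theorem LongTailed.tail_isBigO_tail_add [IsFiniteMeasure μ] (h : LongTailed μ) (a : ℝ) :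
    tail μ =O[atTop] fun x => tail μ (x + a) := by
  have hone : tail μ =O[atTop] fun x => tail μ (x + 1) := by
    refine IsBigO.of_bound 2 ?_
    filter_upwards [h.eventually (lt_mem_nhds one_half_lt_one)] with x hx
    rw [lt_div_iff₀ (h.tail_pos x)] at hx
    simp only [norm_tail]
    linarith
  have hnat : ∀ n : ℕ, tail μ =O[atTop] fun x => tail μ (x + n) := by
    intro n
    induction n with
    | zero => simpa using isBigO_refl (tail μ) atTop
    | succ n ih =>
      refine ih.trans ?_
      simpa [Function.comp_def, add_assoc] using
        hone.comp_tendsto (tendsto_atTop_add_const_right atTop (n : ℝ) tendsto_id)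
  refine (hnat ⌈a⌉₊).trans (isBigO_of_le _ fun x => ?_)
  simp only [norm_tail]
  exact tail_antitone μ (by linarith [Nat.le_ceil a])

instance [IsFiniteMeasure μ] [IsFiniteMeasure ν] : IsFiniteMeasure (mconv μ ν) := by
  unfold mconv
  infer_instance

lemma mconv_apply [SFinite μ] [SFinite ν] {s : Set ℝ} (hs : MeasurableSet s) :
    mconv μ ν s = μ.prod ν ((fun p : ℝ × ℝ => p.1 + p.2) ⁻¹' s) :=
  Measure.map_apply measurable_add hs

lemma mconv_Ioi_eq_lintegral [SFinite μ] [SFinite ν] (x : ℝ) :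
    mconv μ ν (Ioi x) = ∫⁻ y, μ (Ioi (x - y)) ∂ν := by
  rw [mconv_apply measurableSet_Ioi, Measure.prod_apply_symm (measurable_add measurableSet_Ioi)]
  congr! with y
  ext u
  simp [sub_lt_iff_lt_add]

lemma tail_mul_tail_le_tail_mconv [IsFiniteMeasure μ] [IsFiniteMeasure ν] (x b : ℝ) :
    tail μ (x - b) * tail ν b ≤ tail (mconv μ ν) x := by
  simp only [tail, ← ENNReal.toReal_mul, ← Measure.prod_prod]
  refine ENNReal.toReal_mono (measure_ne_top _ _) ?_
  rw [mconv_apply measurableSet_Ioi]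
  refine measure_mono fun p ⟨hu, hy⟩ => ?_
  simp only [mem_Ioi, mem_preimage] at hu hy ⊢
  linarith

lemma exists_tail_pos (ν : Measure ℝ) [IsFiniteMeasure ν] [NeZero ν] : ∃ b, 0 < tail ν b := by
  obtain ⟨x, hx⟩ := ((tendsto_measure_Ici_atBot ν).eventually_ne (NeZero.ne _)).exists
  refine ⟨x - 1, ENNReal.toReal_pos (fun h => hx ?_) (measure_ne_top _ _)⟩
  exact measure_mono_null (fun y (hy : x ≤ y) => show x - 1 < y by linarith) h

theorem LongTailed.tail_isBigO_tail_mconv [IsFiniteMeasure μ] (h : LongTailed μ) (ν : Measure ℝ)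
    [IsFiniteMeasure ν] [NeZero ν] : tail μ =O[atTop] tail (mconv μ ν) := by
  obtain ⟨b, hb⟩ := exists_tail_pos ν
  refine (h.tail_isBigO_tail_add (-b)).trans (IsBigO.of_bound (tail ν b)⁻¹ (.of_forall fun x => ?_))
  rw [norm_tail, norm_tail, inv_mul_eq_div, le_div_iff₀ hb, ← sub_eq_add_neg]
  exact tail_mul_tail_le_tail_mconv x b

lemma intv_le_sum (ν : Measure ℝ) [IsFiniteMeasure ν] (a : ℕ → ℝ) (n : ℕ) :
    intv ν (a 0) (a n) ≤ ∑ k ∈ Finset.range n, intv ν (a k) (a (k + 1)) := by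
  induction n with
  | zero => simp [intv]
  | succ n ih =>
    rw [Finset.sum_range_succ]
    calc intv ν (a 0) (a (n + 1)) ≤ intv ν (a 0) (a n) + intv ν (a n) (a (n + 1)) :=
          (measureReal_mono Ioc_subset_Ioc_union_Ioc).trans (measureReal_union_le _ _)
      _ ≤ _ := by gcongr

theorem isLittleO_intv_add_of_isLittleO_intv_sub_add [IsFiniteMeasure μ] [IsFiniteMeasure ν]
    {c : ℝ} (hc : 0 < c) (h : (fun x => intv ν (x - c) (x + c)) =o[atTop] tail μ) (w : ℝ) :
    (fun x => intv ν x (x + w)) =o[atTop] tail μ := by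
  set N := ⌈w / (2 * c)⌉₊
  have hwindow : ∀ k : ℕ,
      (fun x => intv ν (x + 2 * c * k) (x + 2 * c * (k + 1 : ℕ))) =o[atTop] tail μ := by
    intro k
    have hk := h.comp_tendsto (tendsto_atTop_add_const_right atTop ((2 * k + 1) * c) tendsto_id)
    refine (hk.congr_left fun x => ?_).trans_isBigO (isBigO_of_le _ fun x => ?_)
    · simp only [Function.comp_apply, id_eq]
      push_cast
      ring_nf
    · simp only [Function.comp_apply, id_eq, norm_tail]
      exact tail_antitone μ (by nlinarith)
  refine (isBigO_of_le _ fun x => ?_).trans_isLittleO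
    (IsLittleO.sum (s := Finset.range N) fun k _ => hwindow k)
  have hwN : w ≤ 2 * c * N := by
    rw [← div_le_iff₀' (by positivity)]
    exact Nat.le_ceil _
  rw [norm_intv, Finset.sum_apply, Real.norm_of_nonneg (Finset.sum_nonneg fun _ _ =>
    intv_nonneg ν _ _)]
  calc intv ν x (x + w) ≤ intv ν x (x + 2 * c * N) :=
        measureReal_mono (Ioc_subset_Ioc_right (by linarith))
    _ ≤ _ := by simpa using intv_le_sum ν (fun k => x + 2 * c * k) N

lemma mconv_Ioc_le [SFinite μ] [SFinite ν] (x K : ℝ) :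
    mconv μ ν (Ioc x (x + 1)) ≤ ∫⁻ y in Iic (x - K), μ (Ioc (x - y) (x - y + 1)) ∂ν +
      ∫⁻ u in Iio (K + 1), ν (Ioc (x - u) (x - u + 1)) ∂μ := by
  set S := (fun p : ℝ × ℝ => p.1 + p.2) ⁻¹' Ioc x (x + 1)
  have hS : MeasurableSet S := measurable_add measurableSet_Ioc
  have hsplit : S ⊆ S ∩ univ ×ˢ Iic (x - K) ∪ S ∩ Iio (K + 1) ×ˢ univ := by
    rintro ⟨u, y⟩ hp
    simp only [S, mem_preimage, mem_Ioc] at hp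
    by_cases hy : y ≤ x - K
    · exact Or.inl ⟨hp, trivial, hy⟩
    · exact Or.inr ⟨hp, show u < K + 1 by linarith, trivial⟩
  rw [mconv_apply measurableSet_Ioc]
  refine (measure_mono hsplit).trans ((measure_union_le _ _).trans (add_le_add (le_of_eq ?_)
    (le_of_eq ?_)))
  · rw [← Measure.restrict_apply hS, ← Measure.prod_restrict, Measure.restrict_univ,
      Measure.prod_apply_symm hS]
    congr! with y
    ext u
    simp only [S, mem_preimage, mem_Ioc]
    constructor <;> rintro ⟨h₁, h₂⟩ <;> constructor <;> linarith
  · rw [← Measure.restrict_apply hS, ← Measure.prod_restrict, Measure.restrict_univ,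
      Measure.prod_apply hS]
    congr! with u
    ext y
    simp only [S, mem_preimage, mem_Ioc]
    constructor <;> rintro ⟨h₁, h₂⟩ <;> constructor <;> linarith

lemma intv_mconv_le [IsProbabilityMeasure μ] [IsFiniteMeasure ν] {x K r B : ℝ} (hr : 0 ≤ r)
    (hμ : ∀ t ≥ K, intv μ t (t + 1) ≤ r * tail μ t)
    (hν : ∀ t > x - (K + 1), intv ν t (t + 1) ≤ B) :
    intv (mconv μ ν) x (x + 1) ≤ r * tail (mconv μ ν) x + B := by
  have hB : 0 ≤ B := (intv_nonneg ν _ _).trans (hν (x - K) (by linarith))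
  have hsmallY : ∫⁻ y in Iic (x - K), μ (Ioc (x - y) (x - y + 1)) ∂ν ≤
      ENNReal.ofReal r * mconv μ ν (Ioi x) := by
    rw [mconv_Ioi_eq_lintegral, ← lintegral_const_mul' _ _ ENNReal.ofReal_ne_top]
    refine (setLIntegral_mono' measurableSet_Iic fun y (hy : y ≤ x - K) => ?_).trans
      (setLIntegral_le_lintegral _ _)
    rw [← ENNReal.ofReal_toReal (measure_ne_top μ (Ioi _)), ← ENNReal.ofReal_mul hr,
      ENNReal.le_ofReal_iff_toReal_le (measure_ne_top _ _) (by positivity)]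
    exact hμ _ (by linarith)
  have hsmallX : ∫⁻ u in Iio (K + 1), ν (Ioc (x - u) (x - u + 1)) ∂μ ≤ ENNReal.ofReal B := by
    refine (setLIntegral_mono' measurableSet_Iio fun u (hu : u < K + 1) =>
      (ENNReal.le_ofReal_iff_toReal_le (measure_ne_top _ _) hB).2 (hν _ (by linarith))).trans ?_
    rw [setLIntegral_const]
    exact mul_le_of_le_one_right' prob_le_one
  have hrtail : 0 ≤ r * tail (mconv μ ν) x := mul_nonneg hr (tail_nonneg _ x)
  refine ENNReal.toReal_le_of_le_ofReal (by positivity) ((mconv_Ioc_le x K).trans ?_)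
  rw [ENNReal.ofReal_add hrtail hB, ENNReal.ofReal_mul hr, tail,
    ENNReal.ofReal_toReal (measure_ne_top _ _)]
  exact add_le_add hsmallY hsmallX

theorem LongTailed.isLittleO_intv_mconv [IsProbabilityMeasure μ] [IsProbabilityMeasure ν]
    (h : LongTailed μ) (hν : (fun x => intv ν x (x + 1)) =o[atTop] tail μ) :
    (fun x => intv (mconv μ ν) x (x + 1)) =o[atTop] tail (mconv μ ν) := by
  refine isLittleO_iff.2 fun ε hε => ?_
  obtain ⟨K, hK⟩ := eventually_atTop.1 ((longTailed_iff.1 h).2.bound (half_pos hε))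
  have hshift : (fun x => tail μ (x - (K + 1))) =O[atTop] tail (mconv μ ν) := by
    refine IsBigO.trans ?_ (h.tail_isBigO_tail_mconv ν)
    simpa only [Function.comp_def, id_eq, ← sub_eq_add_neg, sub_add_cancel] using
      (h.tail_isBigO_tail_add (K + 1)).comp_tendsto
        (tendsto_atTop_add_const_right atTop (-(K + 1)) tendsto_id)
  obtain ⟨C, hC, hCbound⟩ := hshift.exists_pos
  obtain ⟨T, hT⟩ := eventually_atTop.1 (hν.bound (div_pos hε (mul_pos two_pos hC)))
  filter_upwards [hCbound.bound, eventually_ge_atTop (T + (K + 1))] with x hxC hxT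
  have hνx : ∀ t > x - (K + 1), intv ν t (t + 1) ≤ ε / (2 * C) * tail μ (x - (K + 1)) := by
    intro t ht
    have hνt := hT t (by linarith)
    rw [norm_intv, norm_tail] at hνt
    exact hνt.trans (by gcongr; exact tail_antitone μ ht.le)
  simp only [norm_intv, norm_tail] at hxC ⊢
  calc intv (mconv μ ν) x (x + 1)
      ≤ ε / 2 * tail (mconv μ ν) x + ε / (2 * C) * tail μ (x - (K + 1)) :=
        intv_mconv_le (half_pos hε).le
          (fun t ht => by simpa only [norm_intv, norm_tail] using hK t ht) hνx
    _ ≤ ε / 2 * tail (mconv μ ν) x + ε / (2 * C) * (C * tail (mconv μ ν) x) := by gcongr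
    _ = ε * tail (mconv μ ν) x := by field_simp; ring

/-- If F1 is long-tailed and F2(x - c, x + c] = o(tail F1 x) for some c > 0, then
the convolution F1 * F2 is long-tailed. -/
theorem stmt4 (F₁ F₂ : Measure ℝ) [IsProbabilityMeasure F₁] [IsProbabilityMeasure F₂]
    (h₁ : LongTailed F₁) (c : ℝ) (hc : 0 < c)
    (ho : (fun x => intv F₂ (x - c) (x + c)) =o[atTop] tail F₁) :
    LongTailed (mconv F₁ F₂) := by
  obtain ⟨b, hb⟩ := exists_tail_pos F₂
  refine longTailed_iff.2 ⟨fun x => ?_, h₁.isLittleO_intv_mconv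
    (isLittleO_intv_add_of_isLittleO_intv_sub_add hc ho 1)⟩
  exact (mul_pos (h₁.tail_pos _) hb).trans_le (tail_mul_tail_le_tail_mconv x b)
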